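/- arXiv:1207.5642 — 2 statements merged into one kernel-verified Lean document; each statement's English description precedes it below -/
import Mathlib

section
/- Suppose A ∈ ℝ^{n×n} and there exist symmetric positive definite matrices P, Q with AᵀP + PA = −Q. Let x, a be differentiable functions with values in ℝⁿ and ℝ^{n+1} satisfying x' = A x − (1/aₙ) b v(τ)ᵀ a and a' = (qₙ/(2aₙ)) C v(τ) qᵀ x, where v : ℝ → ℝ^{n+1} is continuous and the matrix identity qₙ Γ C w qᵀ = w bᵀ P holds for all w ∈ ℝ^{n+1}, Γ symmetric positive definite. Then V(τ) = x(τ)ᵀPx(τ) + 2a(τ)ᵀΓa(τ) is nonincreasing, and consequently x and a are bounded on [0, ∞). -/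
/-!
Differentiating `V = xᵀPx + 2aᵀΓa` along the dynamics, the Lyapunov equation turns the
`A`-part of `ẋ` into `-xᵀQx`, and the design identity makes the two cross terms (the `b`-term of
`ẋ` against `P`, and `ȧ` against `Γ`) cancel exactly. Hence `V' = -xᵀQx ≤ 0`, so `V` is
nonincreasing, and since `P` and `Γ` are positive definite the sublevel set `{V ≤ V 0}`
bounds `x` and `a`.
-/

open Matrix Set

section Calculus

variable {𝕜 ι κ : Type*} [NontriviallyNormedField 𝕜] [Fintype ι]
  {f g : 𝕜 → ι → 𝕜} {f' g' : ι → 𝕜} {t : 𝕜}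

theorem HasDerivAt.dotProduct (hf : HasDerivAt f f' t) (hg : HasDerivAt g g' t) :
    HasDerivAt (fun s => f s ⬝ᵥ g s) (f' ⬝ᵥ g t + f t ⬝ᵥ g') t := by
  unfold _root_.dotProduct
  rw [← Finset.sum_add_distrib]
  exact HasDerivAt.fun_sum fun i _ => (hasDerivAt_pi.1 hf i).fun_mul (hasDerivAt_pi.1 hg i)

theorem HasDerivAt.mulVec (M : Matrix κ ι 𝕜) (hf : HasDerivAt f f' t) :
    HasDerivAt (fun s => M *ᵥ f s) (M *ᵥ f') t :=
  hasDerivAt_pi.2 fun i => ((hasDerivAt_const t (M i)).dotProduct hf).congr_deriv <| by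
    rw [zero_dotProduct, zero_add]; rfl

theorem HasDerivAt.dotProduct_mulVec_self (M : Matrix ι ι 𝕜) (hf : HasDerivAt f f' t) :
    HasDerivAt (fun s => f s ⬝ᵥ M *ᵥ f s) (f' ⬝ᵥ M *ᵥ f t + f t ⬝ᵥ M *ᵥ f') t :=
  hf.dotProduct (hf.mulVec M)

end Calculus

section Coercivity

variable {ι : Type*} [Fintype ι] {M : Matrix ι ι ℝ}

theorem Matrix.PosDef.exists_pos_mul_sq_norm_le (hM : M.PosDef) :
    ∃ c > 0, ∀ x : ι → ℝ, c * ‖x‖ ^ 2 ≤ x ⬝ᵥ M *ᵥ x := by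
  have hpos : ∀ u ∈ Metric.sphere (0 : ι → ℝ) 1, 0 < u ⬝ᵥ M *ᵥ u := fun u hu => by
    simpa using hM.dotProduct_mulVec_pos (ne_zero_of_mem_unit_sphere ⟨u, hu⟩)
  obtain ⟨c, hc, hcle⟩ := (isCompact_sphere (0 : ι → ℝ) 1).exists_forall_le'
    (by fun_prop : Continuous fun u : ι → ℝ => u ⬝ᵥ M *ᵥ u).continuousOn hpos
  refine ⟨c, hc, fun x => ?_⟩
  rcases eq_or_ne x 0 with rfl | hx
  · simp
  have hnorm : ‖x‖ ≠ 0 := norm_ne_zero_iff.2 hx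
  have hu : ‖x‖⁻¹ • x ∈ Metric.sphere (0 : ι → ℝ) 1 := by
    rw [mem_sphere_zero_iff_norm, norm_smul, norm_inv, norm_norm, inv_mul_cancel₀ hnorm]
  calc c * ‖x‖ ^ 2 ≤ (‖x‖⁻¹ • x) ⬝ᵥ M *ᵥ (‖x‖⁻¹ • x) * ‖x‖ ^ 2 := by
        gcongr; exact hcle _ hu
    _ = x ⬝ᵥ M *ᵥ x := by
        simp only [mulVec_smul, smul_dotProduct, dotProduct_smul, smul_eq_mul]
        field_simp

theorem Matrix.PosDef.isBounded_setOf_dotProduct_mulVec_le (hM : M.PosDef) (B : ℝ) :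
    Bornology.IsBounded {x : ι → ℝ | x ⬝ᵥ M *ᵥ x ≤ B} := by
  obtain ⟨c, hc, hle⟩ := hM.exists_pos_mul_sq_norm_le
  refine isBounded_iff_forall_norm_le.2 ⟨√(B / c), fun x hx => Real.le_sqrt_of_sq_le ?_⟩
  rw [le_div_iff₀ hc, mul_comm]
  exact (hle x).trans hx

theorem Matrix.PosSemidef.dotProduct_mulVec_self_nonneg (hM : M.PosSemidef) (x : ι → ℝ) :
    0 ≤ x ⬝ᵥ M *ᵥ x := by
  simpa using hM.dotProduct_mulVec_nonneg x

end Coercivity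

section Algebra

variable {ι κ R : Type*} [Fintype ι] [Fintype κ]

theorem Matrix.IsSymm.dotProduct_mulVec_comm [CommSemiring R] {P : Matrix ι ι R} (hP : P.IsSymm)
    (u w : ι → R) : u ⬝ᵥ P *ᵥ w = w ⬝ᵥ P *ᵥ u := by
  rw [dotProduct_mulVec, ← mulVec_transpose, hP.eq, dotProduct_comm]

theorem Matrix.dotProduct_mulVec_add_eq_neg_of_lyapunov [CommRing R] {A P Q : Matrix ι ι R}
    (hLyap : Aᵀ * P + P * A = -Q) (x : ι → R) :
    (A *ᵥ x) ⬝ᵥ P *ᵥ x + x ⬝ᵥ P *ᵥ (A *ᵥ x) = -(x ⬝ᵥ Q *ᵥ x) := by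
  calc (A *ᵥ x) ⬝ᵥ P *ᵥ x + x ⬝ᵥ P *ᵥ (A *ᵥ x) = x ⬝ᵥ (Aᵀ * P + P * A) *ᵥ x := by
        rw [add_mulVec, dotProduct_add, ← mulVec_mulVec, ← mulVec_mulVec, dotProduct_mulVec x Aᵀ,
          vecMul_transpose]
    _ = -(x ⬝ᵥ Q *ᵥ x) := by rw [hLyap, neg_mulVec, dotProduct_neg]

theorem dotProduct_vecMulVec_mulVec [CommSemiring R] (a u : κ → R) (w x : ι → R) :
    a ⬝ᵥ vecMulVec u w *ᵥ x = (a ⬝ᵥ u) * (w ⬝ᵥ x) := by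
  rw [vecMulVec_mulVec, op_smul_eq_smul, dotProduct_smul, smul_eq_mul, mul_comm]

theorem closedLoop_lyapunov_derivative [Field R] [CharZero R] {A P Q : Matrix ι ι R}
    {Γ C : Matrix κ κ R} {b q x : ι → R} {aN qN : R} {w α : κ → R} (hP : P.IsSymm) (hΓ : Γ.IsSymm)
    (hLyap : Aᵀ * P + P * A = -Q)
    (hdesign : qN • vecMulVec ((Γ * C) *ᵥ w) q = vecMulVec w (b ᵥ* P)) :
    ((A *ᵥ x - (1 / aN) • ((w ⬝ᵥ α) • b)) ⬝ᵥ P *ᵥ x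
        + x ⬝ᵥ P *ᵥ (A *ᵥ x - (1 / aN) • ((w ⬝ᵥ α) • b)))
      + 2 * (((qN / (2 * aN)) • ((q ⬝ᵥ x) • C *ᵥ w)) ⬝ᵥ Γ *ᵥ α
        + α ⬝ᵥ Γ *ᵥ ((qN / (2 * aN)) • ((q ⬝ᵥ x) • C *ᵥ w)))
      = -(x ⬝ᵥ Q *ᵥ x) := by
  have hA := dotProduct_mulVec_add_eq_neg_of_lyapunov hLyap x
  have hb := hP.dotProduct_mulVec_comm x b
  have hC := hΓ.dotProduct_mulVec_comm (C *ᵥ w) α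
  have hcancel : qN * ((α ⬝ᵥ Γ *ᵥ C *ᵥ w) * (q ⬝ᵥ x)) = (w ⬝ᵥ α) * (b ⬝ᵥ P *ᵥ x) := by
    have h := congrArg (fun M => α ⬝ᵥ M *ᵥ x) hdesign
    simpa only [smul_mulVec, dotProduct_smul, dotProduct_vecMulVec_mulVec, smul_eq_mul,
      dotProduct_comm α w, ← dotProduct_mulVec, ← mulVec_mulVec] using h
  simp only [sub_dotProduct, dotProduct_sub, mulVec_sub, mulVec_smul, smul_dotProduct,
    dotProduct_smul, smul_eq_mul]
  linear_combination hA + (2 / aN) * hcancel - (1 / aN) * (w ⬝ᵥ α) * hb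
    + (qN / aN) * (q ⬝ᵥ x) * hC

end Algebra

theorem lyapunov_nonincreasing_and_bounded_general (n : ℕ)
    (A P Q : Matrix (Fin n) (Fin n) ℝ)
    (hP : P.PosDef) (hQ : Q.PosDef) (hLyap : Aᵀ * P + P * A = -Q)
    (Γ C : Matrix (Fin (n + 1)) (Fin (n + 1)) ℝ) (hΓ : Γ.PosDef)
    (b q : Fin n → ℝ) (aN qN : ℝ)
    (v : ℝ → Fin (n + 1) → ℝ)
    (hdesign : ∀ w : Fin (n + 1) → ℝ,
      qN • vecMulVec ((Γ * C).mulVec w) q = vecMulVec w (b ᵥ* P))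
    (x : ℝ → Fin n → ℝ) (a : ℝ → Fin (n + 1) → ℝ)
    (hx : ∀ τ ∈ Ici (0:ℝ),
      HasDerivAt x (A.mulVec (x τ) - (1 / aN) • ((v τ ⬝ᵥ a τ) • b)) τ)
    (ha : ∀ τ ∈ Ici (0:ℝ),
      HasDerivAt a ((qN / (2 * aN)) • ((q ⬝ᵥ x τ) • C.mulVec (v τ))) τ) :
    AntitoneOn (fun τ => x τ ⬝ᵥ P.mulVec (x τ) + 2 * (a τ ⬝ᵥ Γ.mulVec (a τ)))
      (Ici (0:ℝ)) ∧
    ∃ M : ℝ, ∀ τ ∈ Ici (0:ℝ), ‖x τ‖ ≤ M ∧ ‖a τ‖ ≤ M := by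
  set V : ℝ → ℝ := fun τ => x τ ⬝ᵥ P *ᵥ x τ + 2 * (a τ ⬝ᵥ Γ *ᵥ a τ)
  have hV' : ∀ τ ∈ Ici (0:ℝ), HasDerivAt V (-(x τ ⬝ᵥ Q *ᵥ x τ)) τ := fun τ hτ => by
    have h := ((hx τ hτ).dotProduct_mulVec_self P).fun_add
      (((ha τ hτ).dotProduct_mulVec_self Γ).const_mul 2)
    rwa [closedLoop_lyapunov_derivative (isHermitian_iff_isSymm.1 hP.isHermitian)
      (isHermitian_iff_isSymm.1 hΓ.isHermitian) hLyap (hdesign _)] at h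
  have hanti : AntitoneOn V (Ici 0) :=
    antitoneOn_of_hasDerivWithinAt_nonpos (convex_Ici 0)
      (fun τ hτ => (hV' τ hτ).continuousAt.continuousWithinAt)
      (fun τ hτ => (hV' τ (interior_subset hτ)).hasDerivWithinAt)
      (fun τ _ => neg_nonpos.2 (hQ.posSemidef.dotProduct_mulVec_self_nonneg _))
  refine ⟨hanti, ?_⟩
  obtain ⟨Rx, hRx⟩ :=
    isBounded_iff_forall_norm_le.1 (hP.isBounded_setOf_dotProduct_mulVec_le (V 0))
  obtain ⟨Ra, hRa⟩ :=
    isBounded_iff_forall_norm_le.1 (hΓ.isBounded_setOf_dotProduct_mulVec_le (V 0))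
  refine ⟨max Rx Ra, fun τ hτ => ?_⟩
  have hVτ : V τ ≤ V 0 := hanti self_mem_Ici hτ hτ
  have hxP := hP.posSemidef.dotProduct_mulVec_self_nonneg (x τ)
  have haΓ := hΓ.posSemidef.dotProduct_mulVec_self_nonneg (a τ)
  exact ⟨(hRx _ (show x τ ⬝ᵥ P *ᵥ x τ ≤ V 0 by linarith)).trans (le_max_left _ _),
    (hRa _ (show a τ ⬝ᵥ Γ *ᵥ a τ ≤ V 0 by linarith)).trans (le_max_right _ _)⟩

/-- Along the averaged closed-loop dynamics, with the design identity
`qₙ Γ C w qᵀ = w bᵀ P`, the Lyapunov function `V = xᵀPx + 2aᵀΓa` is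
nonincreasing on `[0,∞)`, and hence `x` and `a` are bounded there. -/
theorem lyapunov_nonincreasing_and_bounded (n : ℕ)
    (A P Q : Matrix (Fin n) (Fin n) ℝ)
    (hP : P.PosDef) (hQ : Q.PosDef) (hLyap : Aᵀ * P + P * A = -Q)
    (Γ C : Matrix (Fin (n + 1)) (Fin (n + 1)) ℝ) (hΓ : Γ.PosDef)
    (b q : Fin n → ℝ) (aN qN : ℝ) (haN : aN ≠ 0)
    (v : ℝ → Fin (n + 1) → ℝ) (hv : Continuous v)
    (hdesign : ∀ w : Fin (n + 1) → ℝ,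
      qN • vecMulVec ((Γ * C).mulVec w) q = vecMulVec w (b ᵥ* P))
    (x : ℝ → Fin n → ℝ) (a : ℝ → Fin (n + 1) → ℝ)
    (hx : ∀ τ ∈ Ici (0:ℝ),
      HasDerivAt x (A.mulVec (x τ) - (1 / aN) • ((v τ ⬝ᵥ a τ) • b)) τ)
    (ha : ∀ τ ∈ Ici (0:ℝ),
      HasDerivAt a ((qN / (2 * aN)) • ((q ⬝ᵥ x τ) • C.mulVec (v τ))) τ) :
    AntitoneOn (fun τ => x τ ⬝ᵥ P.mulVec (x τ) + 2 * (a τ ⬝ᵥ Γ.mulVec (a τ)))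
      (Ici (0:ℝ)) ∧
    ∃ M : ℝ, ∀ τ ∈ Ici (0:ℝ), ‖x τ‖ ≤ M ∧ ‖a τ‖ ≤ M :=
  lyapunov_nonincreasing_and_bounded_general n A P Q hP hQ hLyap Γ C hΓ b q aN qN v hdesign x a hx
    ha
end

section
/- Barbalat-type lemma: if V : [0,∞) → ℝ is differentiable, V is bounded below, V' ≤ 0, and V' is uniformly continuous, then V'(t) → 0 as t → ∞. -/
/-!
A function with nonpositive derivative that is bounded below is antitone, hence converges at
infinity, so its increments over a window of fixed length `h` tend to `0`. By the mean value
theorem the derivative is small at some point of every such window, and uniform continuity of the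
derivative, with `h` below its modulus, carries this to every point.
-/

open Set Filter Topology

theorem AntitoneOn.exists_tendsto_atTop_of_bddBelow {α β : Type*} [LinearOrder α]
    [ConditionallyCompleteLinearOrder β] [TopologicalSpace β] [OrderTopology β]
    {f : α → β} {a : α} (hf : AntitoneOn f (Ici a)) (hbdd : BddBelow (f '' Ici a)) :
    ∃ L, Tendsto f atTop (𝓝 L) := by
  set g := fun t => f (max a t)
  have hg : Antitone g := fun s t hst =>
    hf (le_max_left a s) (le_max_left a t) (max_le_max_left a hst)
  have hg_bdd : BddBelow (range g) :=
    hbdd.mono (range_subset_iff.2 fun t => mem_image_of_mem f (le_max_left a t))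
  refine ⟨⨅ t, g t, (tendsto_atTop_ciInf hg hg_bdd).congr' ?_⟩
  filter_upwards [eventually_ge_atTop a] with t ht
  simp only [g, max_eq_right ht]

theorem antitoneOn_Ici_of_hasDerivAt_nonpos {f f' : ℝ → ℝ} {a : ℝ}
    (hf : ∀ t ∈ Ici a, HasDerivAt f (f' t) t) (hf' : ∀ t ∈ Ici a, f' t ≤ 0) :
    AntitoneOn f (Ici a) :=
  antitoneOn_of_hasDerivWithinAt_nonpos (convex_Ici a)
    (fun t ht => (hf t ht).continuousAt.continuousWithinAt)
    (fun t ht => (hf t (interior_subset ht)).hasDerivWithinAt)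
    (fun t ht => hf' t (interior_subset ht))

theorem tendsto_atTop_zero_of_hasDerivAt_of_tendsto {f f' : ℝ → ℝ} {a L : ℝ}
    (hf : ∀ t ∈ Ici a, HasDerivAt f (f' t) t) (hL : Tendsto f atTop (𝓝 L))
    (huc : UniformContinuousOn f' (Ici a)) : Tendsto f' atTop (𝓝 0) := by
  rw [Metric.tendsto_nhds]
  intro ε hε
  obtain ⟨δ, hδ, hclose⟩ := Metric.uniformContinuousOn_iff.1 huc (ε / 2) (half_pos hε)
  obtain ⟨h, hh, hhδ⟩ : ∃ h, 0 < h ∧ h < δ := ⟨δ / 2, half_pos hδ, half_lt_self hδ⟩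
  have hincr : Tendsto (fun t => f (t + h) - f t) atTop (𝓝 0) := by
    simpa using (hL.comp (tendsto_atTop_add_const_right _ h tendsto_id)).sub hL
  filter_upwards [eventually_ge_atTop a,
    Metric.tendsto_nhds.1 hincr (h * (ε / 2)) (by positivity)] with t ht hsmall
  have hsub : Icc t (t + h) ⊆ Ici a := fun x hx => ht.trans hx.1
  obtain ⟨c, hc, hslope⟩ := exists_hasDerivAt_eq_slope f f' (lt_add_of_pos_right t hh)
    (fun x hx => (hf x (hsub hx)).continuousAt.continuousWithinAt)
    (fun x hx => hf x (hsub (Ioo_subset_Icc_self hx)))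
  have hc_small : |f' c| < ε / 2 := by
    rw [hslope, add_sub_cancel_left, abs_div, abs_of_pos hh, div_lt_iff₀ hh, mul_comm]
    simpa [Real.dist_eq] using hsmall
  have hc_near : |f' t - f' c| < ε / 2 := by
    refine Real.dist_eq _ _ ▸ hclose t ht c (hsub (Ioo_subset_Icc_self hc)) ?_
    rw [dist_comm, Real.dist_eq, abs_of_pos (sub_pos.2 hc.1)]
    linarith [hc.2]
  calc dist (f' t) 0 = |f' t - f' c + f' c| := by rw [Real.dist_eq, sub_zero, sub_add_cancel]
    _ ≤ |f' t - f' c| + |f' c| := abs_add_le _ _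
    _ < ε := by linarith

/-- Barbalat-type lemma: if `V` is differentiable on `[0,∞)`, bounded below,
with `V' ≤ 0` uniformly continuous, then `V'(t) → 0` as `t → ∞`. -/
theorem barbalat (V V' : ℝ → ℝ)
    (hV : ∀ t ∈ Ici (0:ℝ), HasDerivAt V (V' t) t)
    (hlb : ∃ m, ∀ t ∈ Ici (0:ℝ), m ≤ V t)
    (hneg : ∀ t ∈ Ici (0:ℝ), V' t ≤ 0)
    (huc : UniformContinuousOn V' (Ici (0:ℝ))) :
    Tendsto V' atTop (nhds 0) := by
  obtain ⟨m, hm⟩ := hlb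
  obtain ⟨L, hL⟩ := (antitoneOn_Ici_of_hasDerivAt_nonpos hV hneg).exists_tendsto_atTop_of_bddBelow
    ⟨m, forall_mem_image.2 hm⟩
  exact tendsto_atTop_zero_of_hasDerivAt_of_tendsto hV hL huc
end
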